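/- Let M be a symmetric real n×n matrix that is indecomposable (there is no nontrivial partition of the index set {1,…,n} into two nonempty parts I, J with M_{ij} = 0 for all i ∈ I, j ∈ J), whose off-diagonal entries are all nonnegative, and suppose there is a vector d with all entries strictly positive such that M·d = 0. Then the quadratic form x ↦ xᵀMx is negative semidefinite, and xᵀMx = 0 holds if and only if x is a scalar multiple of d. -/
import Mathlib


open Matrix

/-- Zariski's lemma, linear algebra form: let `M` be a symmetric real `n×n` matrix which is
indecomposable, has nonnegative off-diagonal entries, and kills a vector `d` with strictly
positive entries.  Then the quadratic form `x ↦ xᵀ M x` is negative semidefinite, and it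
vanishes at `x` iff `x` is a scalar multiple of `d`. -/
theorem stmt_13 (n : ℕ) (M : Matrix (Fin n) (Fin n) ℝ) (hsymm : M.IsSymm)
    (hind : ∀ S : Finset (Fin n), S.Nonempty → S ≠ Finset.univ →
      ∃ i ∈ S, ∃ j ∈ Sᶜ, M i j ≠ 0)
    (hoff : ∀ i j : Fin n, i ≠ j → 0 ≤ M i j)
    (d : Fin n → ℝ) (hd : ∀ i, 0 < d i) (hMd : M.mulVec d = 0) :
    (∀ x : Fin n → ℝ, x ⬝ᵥ M.mulVec x ≤ 0) ∧
    (∀ x : Fin n → ℝ, x ⬝ᵥ M.mulVec x = 0 ↔ ∃ c : ℝ, x = c • d) := by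
  have hdne : ∀ i, d i ≠ 0 := fun i => (hd i).ne'
  have hsym : ∀ i j, M j i = M i j := fun i j => by
    have := congrFun (congrFun hsymm i) j
    simpa [Matrix.transpose_apply] using this
  have rowsum : ∀ i, ∑ j, M i j * d j = 0 := by
    intro i
    have := congrFun hMd i
    simpa [Matrix.mulVec, dotProduct] using this
  have colsum : ∀ j, ∑ i, M i j * d i = 0 := by
    intro j
    calc ∑ i, M i j * d i = ∑ i, M j i * d i :=
          Finset.sum_congr rfl fun i _ => by rw [hsym j i]
      _ = 0 := rowsum j
  -- the key identity
  have key : ∀ x : Fin n → ℝ, x ⬝ᵥ M.mulVec x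
      = -(1/2) * ∑ i, ∑ j, (M i j * d i * d j) * (x i / d i - x j / d j)^2 := by
    intro x
    set y : Fin n → ℝ := fun i => x i / d i with hy
    have hx : ∀ i, x i = y i * d i := fun i =>
      (div_mul_cancel₀ (x i) (hdne i)).symm
    have hQ : x ⬝ᵥ M.mulVec x = ∑ i, ∑ j, M i j * x i * x j := by
      simp only [dotProduct, Matrix.mulVec, Finset.mul_sum]
      exact Finset.sum_congr rfl fun i _ => Finset.sum_congr rfl fun j _ => by ring
    have expand : ∀ i j, (M i j * d i * d j) * (y i - y j)^2
        = (d i * y i ^ 2) * (M i j * d j) + (M i j * d i) * (d j * y j ^ 2)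
          - 2 * (M i j * (y i * d i) * (y j * d j)) := by
      intro i j; ring
    have hS : ∑ i, ∑ j, (M i j * d i * d j) * (y i - y j)^2
        = - 2 * (x ⬝ᵥ M.mulVec x) := by
      have h1 : ∑ i, ∑ j, (d i * y i ^ 2) * (M i j * d j) = 0 := by
        refine Finset.sum_eq_zero fun i _ => ?_
        rw [← Finset.mul_sum, rowsum i, mul_zero]
      have h2 : ∑ i, ∑ j, (M i j * d i) * (d j * y j ^ 2) = 0 := by
        rw [Finset.sum_comm]
        refine Finset.sum_eq_zero fun j _ => ?_
        calc ∑ i, (M i j * d i) * (d j * y j ^ 2)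
            = (∑ i, M i j * d i) * (d j * y j ^ 2) := by rw [Finset.sum_mul]
          _ = 0 := by rw [colsum j, zero_mul]
      have h3 : ∑ i, ∑ j, M i j * (y i * d i) * (y j * d j)
          = x ⬝ᵥ M.mulVec x := by
        rw [hQ]
        exact Finset.sum_congr rfl fun i _ => Finset.sum_congr rfl fun j _ => by
          rw [← hx i, ← hx j]
      calc ∑ i, ∑ j, (M i j * d i * d j) * (y i - y j)^2
          = ∑ i, ∑ j, ((d i * y i ^ 2) * (M i j * d j) + (M i j * d i) * (d j * y j ^ 2)
              - 2 * (M i j * (y i * d i) * (y j * d j))) := by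
            exact Finset.sum_congr rfl fun i _ => Finset.sum_congr rfl fun j _ => expand i j
        _ = (∑ i, ∑ j, (d i * y i ^ 2) * (M i j * d j))
            + (∑ i, ∑ j, (M i j * d i) * (d j * y j ^ 2))
            - 2 * ∑ i, ∑ j, M i j * (y i * d i) * (y j * d j) := by
            simp [Finset.sum_add_distrib, Finset.sum_sub_distrib, Finset.mul_sum]
        _ = - 2 * (x ⬝ᵥ M.mulVec x) := by rw [h1, h2, h3]; ring
    rw [hS]; ring
  -- each term of the sum is nonnegative
  have term_nonneg : ∀ (x : Fin n → ℝ) i j,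
      0 ≤ (M i j * d i * d j) * (x i / d i - x j / d j)^2 := by
    intro x i j
    rcases eq_or_ne i j with rfl | hij
    · simp
    · exact mul_nonneg (mul_nonneg (mul_nonneg (hoff i j hij) (hd i).le) (hd j).le)
        (sq_nonneg _)
  have sum_nonneg : ∀ x : Fin n → ℝ,
      0 ≤ ∑ i, ∑ j, (M i j * d i * d j) * (x i / d i - x j / d j)^2 := by
    intro x
    exact Finset.sum_nonneg fun i _ => Finset.sum_nonneg fun j _ => term_nonneg x i j
  constructor
  · intro x
    rw [key x]
    nlinarith [sum_nonneg x]
  · intro x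
    constructor
    · intro hzero
      -- the sum vanishes, hence each term vanishes
      have hS0 : ∑ i, ∑ j, (M i j * d i * d j) * (x i / d i - x j / d j)^2 = 0 := by
        rw [key x] at hzero; linarith
      have hterm : ∀ i ∈ Finset.univ, ∀ j ∈ Finset.univ,
          (M i j * d i * d j) * (x i / d i - x j / d j)^2 = 0 := by
        intro i _
        have h1 := (Finset.sum_eq_zero_iff_of_nonneg
          (fun i _ => Finset.sum_nonneg fun j _ => term_nonneg x i j)).1 hS0 i (Finset.mem_univ i)
        exact fun j _ => (Finset.sum_eq_zero_iff_of_nonneg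
          (fun j _ => term_nonneg x i j)).1 h1 j (Finset.mem_univ j)
      have heq : ∀ i j, M i j ≠ 0 → x i / d i = x j / d j := by
        intro i j hM
        have h := hterm i (Finset.mem_univ i) j (Finset.mem_univ j)
        have hprod : M i j * d i * d j ≠ 0 :=
          mul_ne_zero (mul_ne_zero hM (hdne i)) (hdne j)
        have := (mul_eq_zero.1 h).resolve_left hprod
        have := pow_eq_zero_iff (n := 2) (by norm_num) |>.1 this
        linarith [sub_eq_zero.1 this]
      rcases Nat.eq_zero_or_pos n with hn | hn
      · refine ⟨0, funext fun i => ?_⟩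
        exact absurd (i.2) (by omega)
      · set i0 : Fin n := ⟨0, hn⟩
        set c : ℝ := x i0 / d i0 with hc
        set S : Finset (Fin n) := Finset.univ.filter (fun i => x i / d i = c) with hSdef
        have hi0 : i0 ∈ S := by simp [hSdef, hc]
        have hSuniv : S = Finset.univ := by
          by_contra hne
          obtain ⟨i, hiS, j, hjS, hMij⟩ := hind S ⟨i0, hi0⟩ hne
          have hiS' : x i / d i = c := by
            simpa [hSdef] using hiS
          have : x j / d j = c := by rw [← heq i j hMij]; exact hiS'
          have : j ∈ S := by simp [hSdef, this]
          simp [Finset.mem_compl] at hjS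
          exact hjS this
        refine ⟨c, funext fun i => ?_⟩
        have hiS : i ∈ S := hSuniv ▸ Finset.mem_univ i
        have hxi : x i / d i = c := by simpa [hSdef] using hiS
        have : x i = c * d i := by
          rw [div_eq_iff (hdne i)] at hxi; linarith
        simpa using this
    · rintro ⟨c, rfl⟩
      have : M.mulVec (c • d) = 0 := by
        rw [Matrix.mulVec_smul, hMd, smul_zero]
      rw [this, dotProduct_zero]
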